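/- Let Ω be an EDS. Then the Ω-typed binary trees with the recursively defined products ≺_α, ≻_α form an Ω-dendriform algebra: for all x, y, z and α, β ∈ Ω, (x≺_α y)≺_β z = x≺_{α←β}(y≺_{α◁β} z) + x≺_{α→β}(y≻_{α▷β} z); x≻_α(y≺_β z) = (x≻_α y)≺_β z; x≻_α(y≻_β z) = (x≻_{α▷β} y)≻_{α→β} z + (x≺_{α◁β} y)≻_{α←β} z. Moreover this is the free Ω-dendriform algebra on one generator, and conversely, if these products make typed trees an Ω-dendriform algebra, then Ω must be an EDS. -/

import Mathlib

/-- A diassociative semigroup: two operations `l` (←) and `r` (→). -/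
def IsDiassoc {Ω : Type*} (l r : Ω → Ω → Ω) : Prop :=
  ∀ a b c : Ω,
    l (l a b) c = l a (l b c) ∧ l a (l b c) = l a (r b c) ∧
    l (r a b) c = r a (l b c) ∧
    r (r a b) c = r a (r b c) ∧ r (l a b) c = r a (r b c)

/-- An extended diassociative semigroup (EDS). -/
def IsEDS {Ω : Type*} (l r tl tr : Ω → Ω → Ω) : Prop :=
  IsDiassoc l r ∧ ∀ a b c : Ω,
    tr a (l b c) = tr a b ∧
    tl (r a b) c = tl b c ∧
    l (tl a b) (tl (l a b) c) = tl a (l b c) ∧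
    tl (tl a b) (tl (l a b) c) = tl b c ∧
    r (tl a b) (tl (l a b) c) = tl a (r b c) ∧
    tr (tl a b) (tl (l a b) c) = tr b c ∧
    l (tr a (r b c)) (tr b c) = tr (l a b) c ∧
    tl (tr a (r b c)) (tr b c) = tl a b ∧
    r (tr a (r b c)) (tr b c) = tr (r a b) c ∧
    tr (tr a (r b c)) (tr b c) = tr a b

/-- The `Ω`-dendriform axioms for products `p = (≺_α)` and `s = (≻_α)`:
`(x≺_α y)≺_β z = x≺_{α←β}(y≺_{α◁β}z) + x≺_{α→β}(y≻_{α▷β}z)`;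
`x≻_α(y≺_β z) = (x≻_α y)≺_β z`;
`x≻_α(y≻_β z) = (x≻_{α▷β}y)≻_{α→β}z + (x≺_{α◁β}y)≻_{α←β}z`. -/
def IsOmegaDendriform {Ω A : Type*} [Add A] (l r tl tr : Ω → Ω → Ω)
    (p s : Ω → A → A → A) : Prop :=
  ∀ (α β : Ω) (x y z : A),
    p β (p α x y) z = p (l α β) x (p (tl α β) y z) + p (r α β) x (s (tr α β) y z) ∧
    s α x (p β y z) = p β (s α x y) z ∧
    s α x (s β y z) = s (r α β) (s (tr α β) x y) z + s (l α β) (p (tl α β) x y) z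

/-- `Ω`-typed plane binary trees with at least one internal vertex: a node with
an optional left subtree and an optional right subtree, each carried together
with the type (in `Ω`) of the edge joining it to the node; `none` stands for a
leaf child. -/
inductive TypedTree (Ω : Type) : Type
  | node : Option (Ω × TypedTree Ω) → Option (Ω × TypedTree Ω) → TypedTree Ω

namespace TypedTree

variable {K : Type} [Field K] {Ω : Type}

mutual
/-- The product `≺_γ` on basis trees: recursively,
`(T₁ ∨_{α,β} T₂) ≺_γ T = T₁ ∨_{α,β←γ} (T₂ ≺_{β◁γ} T) + T₁ ∨_{α,β→γ} (T₂ ≻_{β▷γ} T)`,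
with `(T₁ ∨_{α,∅} |) ≺_γ T = T₁ ∨_{α,γ} T`. -/
noncomputable def precB (l r tl tr : Ω → Ω → Ω) :
    Ω → TypedTree Ω → TypedTree Ω → (TypedTree Ω →₀ K)
  | γ, .node o₁ none, t => Finsupp.single (.node o₁ (some (γ, t))) 1
  | γ, .node o₁ (some (β, T₂)), t =>
      Finsupp.mapDomain (fun u => .node o₁ (some (l β γ, u)))
        (precB l r tl tr (tl β γ) T₂ t)
      + Finsupp.mapDomain (fun u => .node o₁ (some (r β γ, u)))
        (succB l r tl tr (tr β γ) T₂ t)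
  termination_by _ x y => sizeOf x + sizeOf y

/-- The product `≻_α` on basis trees: recursively,
`T ≻_α (T₁ ∨_{β,γ} T₂) = (T ≻_{α▷β} T₁) ∨_{α→β,γ} T₂ + (T ≺_{α◁β} T₁) ∨_{α←β,γ} T₂`,
with `T ≻_α (| ∨_{∅,γ} T₂) = T ∨_{α,γ} T₂`. -/
noncomputable def succB (l r tl tr : Ω → Ω → Ω) :
    Ω → TypedTree Ω → TypedTree Ω → (TypedTree Ω →₀ K)
  | α, t, .node none o₂ => Finsupp.single (.node (some (α, t)) o₂) 1
  | α, t, .node (some (β, T₁)) o₂ =>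
      Finsupp.mapDomain (fun u => .node (some (r α β, u)) o₂)
        (succB l r tl tr (tr α β) t T₁)
      + Finsupp.mapDomain (fun u => .node (some (l α β, u)) o₂)
        (precB l r tl tr (tl α β) t T₁)
  termination_by _ x y => sizeOf x + sizeOf y
end

/-- The bilinear extension of `≺_α` to the free vector space on typed trees. -/
noncomputable def precM (l r tl tr : Ω → Ω → Ω) (α : Ω)
    (x y : TypedTree Ω →₀ K) : TypedTree Ω →₀ K :=
  x.sum fun u cu => y.sum fun v cv => (cu * cv) • precB l r tl tr α u v

/-- The bilinear extension of `≻_α` to the free vector space on typed trees. -/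
noncomputable def succM (l r tl tr : Ω → Ω → Ω) (α : Ω)
    (x y : TypedTree Ω →₀ K) : TypedTree Ω →₀ K :=
  x.sum fun u cu => y.sum fun v cv => (cu * cv) • succB l r tl tr α u v

/-- The one-vertex tree `Y`. -/
def unitTree (Ω : Type) : TypedTree Ω := .node none none

end TypedTree

/-!
Extend `≺_α` and `≻_α` bilinearly. The middle axiom `x ≻_α (y ≺_β z) = (x ≻_α y) ≺_β z` holds
for any `Ω`: on a tree `T₁ ∨ T₂`, the product `x ≻_α -` only rewrites the left branch and
`- ≺_β z` only the right one. The two outer axioms are proved together on basis trees by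
induction on the sizes of `x` and `z`: unfolding the recursion along the right branch of `x`
(resp. the left branch of `z`) produces four terms, which the induction hypothesis, the middle
axiom and diassociativity regroup, and the ten extended identities are exactly what makes their
edge types agree with the other side.

Conversely, expanding the first axiom on `x = | ∨_{∅,a} Y` and `y = z = Y` yields five trees of
pairwise different shapes on each side, and comparing their edge types gives the EDS identities.

Freeness: `T₁ ∨_{α,β} T₂ = (T₁ ≻_α Y) ≺_β T₂`, which forces the value of a morphism on every tree;
the map so defined respects the products by the same induction as above, run in the target
algebra.
-/

open Finsupp

theorem Finsupp.sum_sum_mul_smul_eq_linearCombination {R X Y M : Type*} [CommSemiring R]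
    [AddCommMonoid M] [Module R M] (B : X → Y → M) (x : X →₀ R) (y : Y →₀ R) :
    (x.sum fun u cu => y.sum fun v cv => (cu * cv) • B u v) =
      linearCombination R (fun u => linearCombination R (B u)) x y := by
  simp [linearCombination_apply, LinearMap.finsupp_sum_apply, Finsupp.smul_sum, mul_smul]

/- Each axiom is read as an identity between trilinear maps `x ↦ y ↦ (z ↦ …)`, which agree once
they agree on basis vectors. -/
theorem isOmegaDendriform_of_single {Ω : Type} {R X : Type*} [CommSemiring R]
    (l r tl tr : Ω → Ω → Ω) (p s : Ω → (X →₀ R) →ₗ[R] (X →₀ R) →ₗ[R] (X →₀ R))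
    (h₁ : ∀ α β u v w, p β (p α (single u 1) (single v 1)) (single w 1) =
      p (l α β) (single u 1) (p (tl α β) (single v 1) (single w 1)) +
        p (r α β) (single u 1) (s (tr α β) (single v 1) (single w 1)))
    (h₂ : ∀ α β u v w, s α (single u 1) (p β (single v 1) (single w 1)) =
      p β (s α (single u 1) (single v 1)) (single w 1))
    (h₃ : ∀ α β u v w, s α (single u 1) (s β (single v 1) (single w 1)) =
      s (r α β) (s (tr α β) (single u 1) (single v 1)) (single w 1) +
        s (l α β) (p (tl α β) (single u 1) (single v 1)) (single w 1)) :
    IsOmegaDendriform l r tl tr (fun α x y => p α x y) (fun α x y => s α x y) := by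
  intro α β x y z
  refine ⟨?_, ?_, ?_⟩
  · have : (p α).compr₂ (p β) =
        (LinearMap.llcomp R (X →₀ R) _ _ ∘ₗ p (l α β)).compl₂ (p (tl α β)) +
          (LinearMap.llcomp R (X →₀ R) _ _ ∘ₗ p (r α β)).compl₂ (s (tr α β)) := by
      ext u v w t
      simpa using DFunLike.congr_fun (h₁ α β u v w) t
    exact LinearMap.congr_fun (LinearMap.congr_fun₂ this x y) z
  · have : (LinearMap.llcomp R (X →₀ R) _ _ ∘ₗ s α).compl₂ (p β) = (s α).compr₂ (p β) := by
      ext u v w t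
      simpa using DFunLike.congr_fun (h₂ α β u v w) t
    exact LinearMap.congr_fun (LinearMap.congr_fun₂ this x y) z
  · have : (LinearMap.llcomp R (X →₀ R) _ _ ∘ₗ s α).compl₂ (s β) =
        (s (tr α β)).compr₂ (s (r α β)) + (p (tl α β)).compr₂ (s (l α β)) := by
      ext u v w t
      simpa using DFunLike.congr_fun (h₃ α β u v w) t
    exact LinearMap.congr_fun (LinearMap.congr_fun₂ this x y) z

namespace TypedTree

variable {K : Type} [Field K] {Ω : Type} (l r tl tr : Ω → Ω → Ω)

theorem precB_node_none (γ : Ω) (o : Option (Ω × TypedTree Ω)) (t : TypedTree Ω) :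
    precB (K := K) l r tl tr γ (.node o none) t = single (.node o (some (γ, t))) 1 := by
  rw [precB]

theorem precB_node_some (γ β : Ω) (o : Option (Ω × TypedTree Ω)) (T t : TypedTree Ω) :
    precB (K := K) l r tl tr γ (.node o (some (β, T))) t =
      mapDomain (fun u => .node o (some (l β γ, u))) (precB l r tl tr (tl β γ) T t) +
        mapDomain (fun u => .node o (some (r β γ, u))) (succB l r tl tr (tr β γ) T t) := by
  rw [precB]

theorem succB_node_none (γ : Ω) (o : Option (Ω × TypedTree Ω)) (t : TypedTree Ω) :
    succB (K := K) l r tl tr γ t (.node none o) = single (.node (some (γ, t)) o) 1 := by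
  rw [succB]

theorem succB_node_some (γ β : Ω) (o : Option (Ω × TypedTree Ω)) (T t : TypedTree Ω) :
    succB (K := K) l r tl tr γ t (.node (some (β, T)) o) =
      mapDomain (fun u => .node (some (r γ β, u)) o) (succB l r tl tr (tr γ β) t T) +
        mapDomain (fun u => .node (some (l γ β, u)) o) (precB l r tl tr (tl γ β) t T) := by
  rw [succB]

noncomputable def precLin (α : Ω) :
    (TypedTree Ω →₀ K) →ₗ[K] (TypedTree Ω →₀ K) →ₗ[K] (TypedTree Ω →₀ K) :=
  linearCombination K fun u => linearCombination K (precB l r tl tr α u)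

noncomputable def succLin (α : Ω) :
    (TypedTree Ω →₀ K) →ₗ[K] (TypedTree Ω →₀ K) →ₗ[K] (TypedTree Ω →₀ K) :=
  linearCombination K fun u => linearCombination K (succB l r tl tr α u)

theorem precM_eq_precLin :
    precM (K := K) l r tl tr = fun α x y => precLin l r tl tr α x y := by
  funext α x y
  exact sum_sum_mul_smul_eq_linearCombination _ x y

theorem succM_eq_succLin :
    succM (K := K) l r tl tr = fun α x y => succLin l r tl tr α x y := by
  funext α x y
  exact sum_sum_mul_smul_eq_linearCombination _ x y

@[simp] theorem precLin_single (α : Ω) (u v : TypedTree Ω) :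
    precLin l r tl tr α (single u 1) (single v 1) = precB (K := K) l r tl tr α u v := by
  simp [precLin]

@[simp] theorem succLin_single (α : Ω) (u v : TypedTree Ω) :
    succLin l r tl tr α (single u 1) (single v 1) = succB (K := K) l r tl tr α u v := by
  simp [succLin]

section Graft

noncomputable def graftRight (o : Option (Ω × TypedTree Ω)) (γ : Ω) :
    (TypedTree Ω →₀ K) →ₗ[K] (TypedTree Ω →₀ K) :=
  lmapDomain K K fun t => .node o (some (γ, t))

noncomputable def graftLeft (γ : Ω) (o : Option (Ω × TypedTree Ω)) :
    (TypedTree Ω →₀ K) →ₗ[K] (TypedTree Ω →₀ K) :=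
  lmapDomain K K fun t => .node (some (γ, t)) o

@[simp] theorem graftRight_single (o : Option (Ω × TypedTree Ω)) (γ : Ω) (t : TypedTree Ω) :
    graftRight (K := K) o γ (single t 1) = single (.node o (some (γ, t))) 1 := by
  simp [graftRight]

@[simp] theorem graftLeft_single (γ : Ω) (o : Option (Ω × TypedTree Ω)) (t : TypedTree Ω) :
    graftLeft (K := K) γ o (single t 1) = single (.node (some (γ, t)) o) 1 := by
  simp [graftLeft]

theorem precLin_node_none (γ : Ω) (o : Option (Ω × TypedTree Ω)) :
    precLin l r tl tr γ (single (.node o none) 1) = graftRight (K := K) o γ := by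
  ext t
  simp [precB_node_none]

theorem succLin_node_none (γ : Ω) (o : Option (Ω × TypedTree Ω)) (w : TypedTree Ω →₀ K) :
    succLin l r tl tr γ w (single (.node none o) 1) = graftLeft γ o w := by
  have : (succLin l r tl tr γ).flip (single (.node none o) 1) = graftLeft (K := K) γ o := by
    ext t
    simp [succB_node_none]
  exact LinearMap.congr_fun this w

theorem precLin_graftRight (o : Option (Ω × TypedTree Ω)) (γ β : Ω) (w z : TypedTree Ω →₀ K) :
    precLin l r tl tr β (graftRight o γ w) z =
      graftRight o (l γ β) (precLin l r tl tr (tl γ β) w z) +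
        graftRight o (r γ β) (succLin l r tl tr (tr γ β) w z) := by
  have : (precLin l r tl tr β).comp (graftRight (K := K) o γ) =
      (precLin l r tl tr (tl γ β)).compr₂ (graftRight o (l γ β)) +
        (succLin l r tl tr (tr γ β)).compr₂ (graftRight o (r γ β)) := by
    ext t u
    simp [graftRight, precB_node_some]
  exact LinearMap.congr_fun₂ this w z

theorem succLin_graftLeft (o : Option (Ω × TypedTree Ω)) (α γ : Ω) (x w : TypedTree Ω →₀ K) :
    succLin l r tl tr α x (graftLeft γ o w) =
      graftLeft (r α γ) o (succLin l r tl tr (tr α γ) x w) +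
        graftLeft (l α γ) o (precLin l r tl tr (tl α γ) x w) := by
  have : (succLin l r tl tr α).compl₂ (graftLeft (K := K) γ o) =
      (succLin l r tl tr (tr α γ)).compr₂ (graftLeft (r α γ) o) +
        (precLin l r tl tr (tl α γ)).compr₂ (graftLeft (l α γ) o) := by
    ext t u
    simp [graftLeft, succB_node_some]
  exact LinearMap.congr_fun₂ this x w

theorem single_node_none_some (β : Ω) (T : TypedTree Ω) :
    single (.node none (some (β, T))) 1 =
      precLin l r tl tr β (single (unitTree Ω) 1) (single T (1 : K)) := by
  simp [unitTree, precB_node_none]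

theorem single_node_some_none (α : Ω) (T : TypedTree Ω) :
    single (.node (some (α, T)) none) 1 =
      succLin l r tl tr α (single T 1) (single (unitTree Ω) (1 : K)) := by
  simp [unitTree, succB_node_none]

theorem single_node_some_some (α β : Ω) (T₁ T₂ : TypedTree Ω) :
    single (.node (some (α, T₁)) (some (β, T₂))) 1 =
      precLin l r tl tr β (succLin l r tl tr α (single T₁ 1) (single (unitTree Ω) 1))
        (single T₂ (1 : K)) := by
  simp [unitTree, succB_node_none, precB_node_none]

end Graft

section Branches

noncomputable def nodeLin : (Option (Ω × TypedTree Ω) →₀ K) →ₗ[K]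
    (Option (Ω × TypedTree Ω) →₀ K) →ₗ[K] (TypedTree Ω →₀ K) :=
  linearCombination K fun p => linearCombination K fun q => single (.node p q) 1

@[simp] theorem nodeLin_single (p q : Option (Ω × TypedTree Ω)) :
    nodeLin (single p 1) (single q 1) = (single (.node p q) 1 : TypedTree Ω →₀ K) := by
  simp [nodeLin]

theorem nodeLin_mapDomain_single (f : TypedTree Ω → Option (Ω × TypedTree Ω))
    (w : TypedTree Ω →₀ K) (q : Option (Ω × TypedTree Ω)) :
    nodeLin (mapDomain f w) (single q 1) = mapDomain (fun t => .node (f t) q) w := by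
  have : nodeLin.flip (single q 1) ∘ₗ lmapDomain K K f =
      lmapDomain K K (fun t => TypedTree.node (f t) q) := by
    ext t
    simp
  exact LinearMap.congr_fun this w

theorem nodeLin_single_mapDomain (p : Option (Ω × TypedTree Ω))
    (f : TypedTree Ω → Option (Ω × TypedTree Ω)) (w : TypedTree Ω →₀ K) :
    nodeLin (single p 1) (mapDomain f w) = mapDomain (fun t => .node p (f t)) w := by
  have : nodeLin (single p 1) ∘ₗ lmapDomain K K f =
      lmapDomain K K (fun t => TypedTree.node p (f t)) := by
    ext t
    simp
  exact LinearMap.congr_fun this w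

/- `succBranch α x o` is the new left branch of `x ≻_α (o ∨ q)`, whatever the right branch `q`
(`succB_node_eq_nodeLin`); symmetrically for `precBranch`. -/
noncomputable def succBranch (α : Ω) (x : TypedTree Ω) :
    Option (Ω × TypedTree Ω) → (Option (Ω × TypedTree Ω) →₀ K)
  | none => single (Option.some (α, x)) 1
  | .some (ε, T) =>
      mapDomain (fun u => Option.some (r α ε, u)) (succB l r tl tr (tr α ε) x T) +
        mapDomain (fun u => Option.some (l α ε, u)) (precB l r tl tr (tl α ε) x T)

noncomputable def precBranch (β : Ω) (z : TypedTree Ω) :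
    Option (Ω × TypedTree Ω) → (Option (Ω × TypedTree Ω) →₀ K)
  | none => single (Option.some (β, z)) 1
  | .some (δ, T) =>
      mapDomain (fun u => Option.some (l δ β, u)) (precB l r tl tr (tl δ β) T z) +
        mapDomain (fun u => Option.some (r δ β, u)) (succB l r tl tr (tr δ β) T z)

theorem succB_node_eq_nodeLin (α : Ω) (x : TypedTree Ω) (p q : Option (Ω × TypedTree Ω)) :
    succB l r tl tr α x (.node p q) =
      nodeLin (succBranch (K := K) l r tl tr α x p) (single q 1) := by
  match p with
  | none => simp [succB_node_none, succBranch]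
  | .some (ε, T) => simp [succB_node_some, succBranch, nodeLin_mapDomain_single]

theorem precB_node_eq_nodeLin (β : Ω) (z : TypedTree Ω) (p q : Option (Ω × TypedTree Ω)) :
    precB l r tl tr β (.node p q) z =
      nodeLin (single p 1) (precBranch (K := K) l r tl tr β z q) := by
  match q with
  | none => simp [precB_node_none, precBranch]
  | .some (δ, T) => simp [precB_node_some, precBranch, nodeLin_single_mapDomain]

theorem succLin_nodeLin (α : Ω) (x : TypedTree Ω) (a b : Option (Ω × TypedTree Ω) →₀ K) :
    succLin l r tl tr α (single x 1) (nodeLin a b) =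
      nodeLin (linearCombination K (succBranch l r tl tr α x) a) b := by
  have : nodeLin.compr₂ (succLin l r tl tr α (single x 1)) =
      nodeLin ∘ₗ linearCombination K (succBranch (K := K) l r tl tr α x) := by
    ext p q
    simp [succB_node_eq_nodeLin]
  exact LinearMap.congr_fun₂ this a b

theorem precLin_nodeLin (β : Ω) (z : TypedTree Ω) (a b : Option (Ω × TypedTree Ω) →₀ K) :
    precLin l r tl tr β (nodeLin a b) (single z 1) =
      nodeLin a (linearCombination K (precBranch l r tl tr β z) b) := by
  have : nodeLin.compr₂ ((precLin l r tl tr β).flip (single z 1)) =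
      nodeLin.compl₂ (linearCombination K (precBranch (K := K) l r tl tr β z)) := by
    ext p q
    simp [precB_node_eq_nodeLin]
  exact LinearMap.congr_fun₂ this a b

theorem succLin_precLin_single (α β : Ω) (x y z : TypedTree Ω) :
    succLin l r tl tr α (single x (1 : K)) (precLin l r tl tr β (single y 1) (single z 1)) =
      precLin l r tl tr β (succLin l r tl tr α (single x 1) (single y 1)) (single z 1) := by
  obtain ⟨p, q⟩ := y
  rw [← nodeLin_single, precLin_nodeLin, succLin_nodeLin, succLin_nodeLin, precLin_nodeLin]

end Branches

mutual

theorem precLin_precLin_single (hE : IsEDS l r tl tr) (α β : Ω) (x y z : TypedTree Ω) :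
    precLin l r tl tr β (precLin l r tl tr α (single x (1 : K)) (single y 1)) (single z 1) =
      precLin l r tl tr (l α β) (single x 1)
          (precLin l r tl tr (tl α β) (single y 1) (single z 1)) +
        precLin l r tl tr (r α β) (single x 1)
          (succLin l r tl tr (tr α β) (single y 1) (single z 1)) := by
  match x with
  | .node o none => simp only [precLin_node_none, precLin_graftRight]
  | .node o (.some (δ, T)) =>
    -- the `e`s bring the edge types of `ih₁`, `ih₃`, `mid` to those of the unfolded right-hand
    -- side, and diassociativity (`d`s) matches the edge types of the grafted branches
    obtain ⟨d₁, d₂, d₃, d₄, d₅⟩ := hE.1 δ α β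
    obtain ⟨e₁, e₂, e₃, e₄, e₅, e₆, e₇, e₈, e₉, e₁₀⟩ := hE.2 δ α β
    have ih₁ := precLin_precLin_single hE (tl δ α) (tl (l δ α) β) T y z
    rw [e₃, e₄, e₅, e₆] at ih₁
    have ih₃ := succLin_succLin_single hE (tr δ (r α β)) (tr α β) T y z
    rw [e₇, e₈, e₉, e₁₀] at ih₃
    have mid := succLin_precLin_single (K := K) l r tl tr (tr δ α) (tl (r δ α) β) T y z
    rw [e₂] at mid
    rw [← graftRight_single]
    simp only [precLin_graftRight, map_add, LinearMap.add_apply]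
    rw [ih₁, e₁, e₂, ← mid, d₁, d₃, d₄, d₅, ← d₂, ih₃]
    simp only [map_add]
    ac_rfl
termination_by sizeOf x + sizeOf z

theorem succLin_succLin_single (hE : IsEDS l r tl tr) (α β : Ω) (x y z : TypedTree Ω) :
    succLin l r tl tr α (single x (1 : K)) (succLin l r tl tr β (single y 1) (single z 1)) =
      succLin l r tl tr (r α β)
          (succLin l r tl tr (tr α β) (single x 1) (single y 1)) (single z 1) +
        succLin l r tl tr (l α β)
          (precLin l r tl tr (tl α β) (single x 1) (single y 1)) (single z 1) := by
  match z with
  | .node none o => simp only [succLin_node_none, succLin_graftLeft]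
  | .node (.some (ε, T)) o =>
    obtain ⟨d₁, d₂, d₃, d₄, d₅⟩ := hE.1 α β ε
    obtain ⟨e₁, e₂, e₃, e₄, e₅, e₆, e₇, e₈, e₉, e₁₀⟩ := hE.2 α β ε
    have ih₁ := precLin_precLin_single hE (tl α β) (tl (l α β) ε) x y T
    rw [e₃, e₄, e₅, e₆] at ih₁
    have ih₃ := succLin_succLin_single hE (tr α (r β ε)) (tr β ε) x y T
    rw [e₇, e₈, e₉, e₁₀] at ih₃
    have mid := succLin_precLin_single (K := K) l r tl tr (tr α β) (tl (r α β) ε) x y T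
    rw [← graftLeft_single]
    simp only [succLin_graftLeft, map_add]
    rw [ih₃, ih₁, ← mid, e₁, e₂, d₁, d₃, d₄, d₅, ← d₂]
    simp only [map_add]
    ac_rfl
termination_by sizeOf x + sizeOf z

end

theorem isOmegaDendriform_of_isEDS (hE : IsEDS l r tl tr) :
    IsOmegaDendriform l r tl tr (fun α x y => precLin (K := K) l r tl tr α x y)
      (fun α x y => succLin l r tl tr α x y) :=
  isOmegaDendriform_of_single l r tl tr _ _ (precLin_precLin_single l r tl tr hE)
    (succLin_precLin_single l r tl tr) (succLin_succLin_single l r tl tr hE)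

theorem edgeTypes_eq_of_isOmegaDendriform
    (h : IsOmegaDendriform l r tl tr (fun α x y => precLin (K := K) l r tl tr α x y)
      (fun α x y => succLin l r tl tr α x y)) (a b c : Ω) :
    (l a (l b c) = l (l a b) c ∧ tl a (l b c) = l (tl a b) (tl (l a b) c) ∧
      tl b c = tl (tl a b) (tl (l a b) c)) ∧
    (l a (r b c) = l (l a b) c ∧ tl a (r b c) = r (tl a b) (tl (l a b) c) ∧
      tr b c = tr (tl a b) (tl (l a b) c)) ∧
    (r a (r b c) = r (l a b) c ∧ l (tr a (r b c)) (tr b c) = tr (l a b) c ∧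
      tl (tr a (r b c)) (tr b c) = tl a b) ∧
    (r a (l b c) = l (r a b) c ∧ tr a (l b c) = tr a b ∧ tl b c = tl (r a b) c) ∧
    (r a (r b c) = r (r a b) c ∧ r (tr a (r b c)) (tr b c) = tr (r a b) c ∧
      tr (tr a (r b c)) (tr b c) = tr a b) := by
  classical
  let Y : TypedTree Ω := .node none none
  let R (a : Ω) (t : TypedTree Ω) : TypedTree Ω := .node none (some (a, t))
  let L (a : Ω) (t : TypedTree Ω) : TypedTree Ω := .node (some (a, t)) none
  have hY := (h b c (single (R a Y) 1) (single Y 1) (single Y 1)).1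
  simp only [R, Y, precLin_single, succLin_single, precB_node_some, precB_node_none,
    succB_node_none, succB_node_some, mapDomain_single, mapDomain_add, map_add,
    LinearMap.add_apply] at hY
  have coeff (t : TypedTree Ω) := DFunLike.congr_fun hY t
  simp only [Finsupp.add_apply, single_apply] at coeff
  refine ⟨?_, ?_, ?_, ?_, ?_⟩
  · simpa [R, Y] using coeff
      (R (l (l a b) c) (R (l (tl a b) (tl (l a b) c)) (R (tl (tl a b) (tl (l a b) c)) Y)))
  · simpa [R, L, Y] using coeff
      (R (l (l a b) c) (R (r (tl a b) (tl (l a b) c)) (L (tr (tl a b) (tl (l a b) c)) Y)))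
  · simpa [R, L, Y] using coeff (R (r (l a b) c) (L (tr (l a b) c) (R (tl a b) Y)))
  · simpa [R, Y] using coeff (R (l (r a b) c) (.node (some (tr a b, Y)) (some (tl (r a b) c, Y))))
  · simpa [R, L, Y] using coeff (R (r (r a b) c) (L (tr (r a b) c) (L (tr a b) Y)))

theorem isEDS_of_isOmegaDendriform
    (h : IsOmegaDendriform l r tl tr (fun α x y => precLin (K := K) l r tl tr α x y)
      (fun α x y => succLin l r tl tr α x y)) :
    IsEDS l r tl tr := by
  refine ⟨fun a b c => ?_, fun a b c => ?_⟩
  · obtain ⟨⟨c₁, -, -⟩, ⟨c₂, -, -⟩, ⟨c₃, -, -⟩, ⟨c₄, -, -⟩, ⟨c₅, -, -⟩⟩ :=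
      edgeTypes_eq_of_isOmegaDendriform l r tl tr h a b c
    exact ⟨c₁.symm, c₁.trans c₂.symm, c₄.symm, c₅.symm, c₃.symm⟩
  · obtain ⟨⟨-, c₁b, c₁c⟩, ⟨-, c₂b, c₂c⟩, ⟨-, c₃b, c₃c⟩, ⟨-, c₄b, c₄c⟩, ⟨-, c₅b, c₅c⟩⟩ :=
      edgeTypes_eq_of_isOmegaDendriform l r tl tr h a b c
    exact ⟨c₄b, c₄c.symm, c₁b.symm, c₁c.symm, c₂b.symm, c₂c.symm, c₃b, c₃c, c₅b, c₅c⟩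

section Free

variable {A : Type} [AddCommGroup A] [Module K A] (p s : Ω → A →ₗ[K] A →ₗ[K] A) (a : A)

def evalTree : TypedTree Ω → A
  | .node none none => a
  | .node none (.some (β, T₂)) => p β a (evalTree T₂)
  | .node (.some (α, T₁)) none => s α (evalTree T₁) a
  | .node (.some (α, T₁)) (.some (β, T₂)) => p β (s α (evalTree T₁) a) (evalTree T₂)

noncomputable def evalLin : (TypedTree Ω →₀ K) →ₗ[K] A :=
  linearCombination K (evalTree p s a)

variable {l r tl tr}

@[simp] theorem evalLin_single (t : TypedTree Ω) :
    evalLin p s a (single t 1) = evalTree p s a t := by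
  simp [evalLin]

theorem evalTree_node_some_right (o : Option (Ω × TypedTree Ω)) (γ : Ω) (t : TypedTree Ω) :
    evalTree p s a (.node o (some (γ, t))) =
      p γ (evalTree p s a (.node o none)) (evalTree p s a t) := by
  cases o <;> rfl

theorem evalTree_node_some_left
    (hd : IsOmegaDendriform l r tl tr (fun α (x y : A) => p α x y) (fun α x y => s α x y))
    (o : Option (Ω × TypedTree Ω)) (γ : Ω) (t : TypedTree Ω) :
    evalTree p s a (.node (some (γ, t)) o) =
      s γ (evalTree p s a t) (evalTree p s a (.node none o)) := by
  match o with
  | none => rfl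
  | .some (δ, T) => exact (hd γ δ (evalTree p s a t) a (evalTree p s a T)).2.1.symm

theorem evalLin_graftRight (o : Option (Ω × TypedTree Ω)) (γ : Ω) (w : TypedTree Ω →₀ K) :
    evalLin p s a (graftRight o γ w) =
      p γ (evalTree p s a (.node o none)) (evalLin p s a w) := by
  have : evalLin p s a ∘ₗ graftRight o γ =
      p γ (evalTree p s a (.node o none)) ∘ₗ evalLin p s a := by
    ext t
    simp [evalTree_node_some_right]
  exact LinearMap.congr_fun this w

theorem evalLin_graftLeft
    (hd : IsOmegaDendriform l r tl tr (fun α (x y : A) => p α x y) (fun α x y => s α x y))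
    (o : Option (Ω × TypedTree Ω)) (γ : Ω) (w : TypedTree Ω →₀ K) :
    evalLin p s a (graftLeft γ o w) =
      s γ (evalLin p s a w) (evalTree p s a (.node none o)) := by
  have : evalLin p s a ∘ₗ graftLeft γ o =
      (s γ).flip (evalTree p s a (.node none o)) ∘ₗ evalLin p s a := by
    ext t
    simp [evalTree_node_some_left p s a hd]
  exact LinearMap.congr_fun this w

mutual

theorem evalLin_precLin_single
    (hd : IsOmegaDendriform l r tl tr (fun α (x y : A) => p α x y) (fun α x y => s α x y))
    (γ : Ω) (u v : TypedTree Ω) :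
    evalLin p s a (precLin l r tl tr γ (single u 1) (single v 1)) =
      p γ (evalTree p s a u) (evalTree p s a v) := by
  match u with
  | .node o none =>
    rw [precLin_node_none, graftRight_single, evalLin_single, evalTree_node_some_right]
  | .node o (.some (δ, T)) =>
    rw [← graftRight_single, precLin_graftRight, map_add, evalLin_graftRight,
      evalLin_graftRight, evalLin_precLin_single hd, evalLin_succLin_single hd,
      evalTree_node_some_right]
    exact (hd δ γ _ _ _).1.symm
termination_by sizeOf u + sizeOf v

theorem evalLin_succLin_single
    (hd : IsOmegaDendriform l r tl tr (fun α (x y : A) => p α x y) (fun α x y => s α x y))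
    (γ : Ω) (u v : TypedTree Ω) :
    evalLin p s a (succLin l r tl tr γ (single u 1) (single v 1)) =
      s γ (evalTree p s a u) (evalTree p s a v) := by
  match v with
  | .node none o =>
    rw [succLin_node_none, graftLeft_single, evalLin_single, evalTree_node_some_left p s a hd]
  | .node (.some (ε, T)) o =>
    rw [← graftLeft_single, succLin_graftLeft, map_add, evalLin_graftLeft p s a hd,
      evalLin_graftLeft p s a hd, evalLin_precLin_single hd, evalLin_succLin_single hd,
      evalTree_node_some_left p s a hd]
    exact (hd γ ε _ _ _).2.2.symm
termination_by sizeOf u + sizeOf v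

end

theorem evalLin_precLin
    (hd : IsOmegaDendriform l r tl tr (fun α (x y : A) => p α x y) (fun α x y => s α x y))
    (γ : Ω) (x y : TypedTree Ω →₀ K) :
    evalLin p s a (precLin l r tl tr γ x y) = p γ (evalLin p s a x) (evalLin p s a y) := by
  have : (precLin l r tl tr γ).compr₂ (evalLin p s a) =
      (p γ).compl₁₂ (evalLin p s a) (evalLin p s a) := by
    ext u v
    simpa using evalLin_precLin_single p s a hd γ u v
  exact LinearMap.congr_fun₂ this x y

theorem evalLin_succLin
    (hd : IsOmegaDendriform l r tl tr (fun α (x y : A) => p α x y) (fun α x y => s α x y))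
    (γ : Ω) (x y : TypedTree Ω →₀ K) :
    evalLin p s a (succLin l r tl tr γ x y) = s γ (evalLin p s a x) (evalLin p s a y) := by
  have : (succLin l r tl tr γ).compr₂ (evalLin p s a) =
      (s γ).compl₁₂ (evalLin p s a) (evalLin p s a) := by
    ext u v
    simpa using evalLin_succLin_single p s a hd γ u v
  exact LinearMap.congr_fun₂ this x y

theorem apply_single_eq_evalTree (Ψ : (TypedTree Ω →₀ K) →ₗ[K] A)
    (hY : Ψ (single (unitTree Ω) 1) = a)
    (hp : ∀ α x y, Ψ (precLin l r tl tr α x y) = p α (Ψ x) (Ψ y))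
    (hs : ∀ α x y, Ψ (succLin l r tl tr α x y) = s α (Ψ x) (Ψ y)) :
    ∀ t : TypedTree Ω, Ψ (single t 1) = evalTree p s a t
  | .node none none => hY
  | .node none (.some (β, T)) => by
    rw [single_node_none_some l r tl tr, hp, hY, apply_single_eq_evalTree Ψ hY hp hs T]
    rfl
  | .node (.some (α, T)) none => by
    rw [single_node_some_none l r tl tr, hs, hY, apply_single_eq_evalTree Ψ hY hp hs T]
    rfl
  | .node (.some (α, T₁)) (.some (β, T₂)) => by
    rw [single_node_some_some l r tl tr, hp, hs, hY, apply_single_eq_evalTree Ψ hY hp hs T₁,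
      apply_single_eq_evalTree Ψ hY hp hs T₂]
    rfl

end Free

end TypedTree

open TypedTree in
/-- Proposition 15: for a set `Ω` with four operations `←, →, ◁, ▷`, the
recursively defined products `≺_α, ≻_α` make the span of `Ω`-typed binary trees
an `Ω`-dendriform algebra if and only if `Ω` is an EDS; and in that case it is
the free `Ω`-dendriform algebra generated by the one-vertex tree `Y`: for every
`Ω`-dendriform algebra `A` (with bilinear products) and every `a ∈ A` there is
a unique linear map to `A` sending `Y` to `a` and compatible with all the
products `≺_α, ≻_α`. -/
theorem stmt16 {K : Type} [Field K] {Ω : Type} (l r tl tr : Ω → Ω → Ω) :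
    (IsEDS l r tl tr ↔
      IsOmegaDendriform l r tl tr
        (precM (K := K) l r tl tr) (succM (K := K) l r tl tr)) ∧
    (IsEDS l r tl tr →
      ∀ (A : Type) [AddCommGroup A] [Module K A]
        (p s : Ω → A →ₗ[K] A →ₗ[K] A),
        IsOmegaDendriform l r tl tr
          (fun α x y => p α x y) (fun α x y => s α x y) →
        ∀ a : A,
          ∃! Φ : (TypedTree Ω →₀ K) →ₗ[K] A,
            Φ (Finsupp.single (unitTree Ω) 1) = a ∧
            (∀ (α : Ω) (x y : TypedTree Ω →₀ K),
              Φ (precM l r tl tr α x y) = p α (Φ x) (Φ y)) ∧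
            (∀ (α : Ω) (x y : TypedTree Ω →₀ K),
              Φ (succM l r tl tr α x y) = s α (Φ x) (Φ y))) := by
  simp only [precM_eq_precLin, succM_eq_succLin]
  refine ⟨⟨isOmegaDendriform_of_isEDS l r tl tr, isEDS_of_isOmegaDendriform l r tl tr⟩, ?_⟩
  intro _ A _ _ p s hd a
  refine ⟨evalLin p s a, ⟨evalLin_single p s a _, evalLin_precLin p s a hd,
    evalLin_succLin p s a hd⟩, fun Ψ ⟨hY, hp, hs⟩ => ?_⟩
  exact lhom_ext' fun t => LinearMap.ext_ring <| by
    simpa using apply_single_eq_evalTree p s a Ψ hY hp hs t
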